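/- arXiv:1503.07156 — 2 statements merged into one kernel-verified Lean document; each statement's English description precedes it below -/
import Mathlib

section
/- Let $V : (0,\infty) \to \mathbb{C}$ be a smooth function with $|V(y)| \ll (1+y)^{-1}$ and $|V'(y)| \ll y^{-1}(1+y)^{-1}$, and suppose that for some constants $\alpha \in (1/2, 1)$ and $\beta > 0$ and all $x \geq 1$ the character sum bound $|\sum_{n \leq x} \chi(n)| \leq A x^{\alpha} q^{\beta}$ holds. Then $\left| \sum_{n \geq 1} \frac{\chi(n)}{\sqrt{n}} V\left(\frac{n}{\sqrt{q}}\right) \right| \ll A\, q^{\beta + (\alpha - 1/2)/2}$, with an implied constant depending only on $\alpha$ and the constants in the bounds on $V$. -/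
open Finset

set_option maxHeartbeats 2000000

lemma rpow_mvt (p a b : ℝ) (ha : 0 < a) (hab : a < b) :
    ∃ c ∈ Set.Ioo a b, b ^ p - a ^ p = p * c ^ (p - 1) * (b - a) := by
  obtain ⟨c, hc, hceq⟩ := exists_hasDerivAt_eq_slope (fun x => x ^ p)
    (fun x => p * x ^ (p - 1)) hab
    (fun x hx => (Real.continuousAt_rpow_const x p
      (Or.inl (lt_of_lt_of_le ha hx.1).ne')).continuousWithinAt)
    (fun x hx => Real.hasDerivAt_rpow_const (Or.inl (ha.trans hx.1).ne'))
  refine ⟨c, hc, ?_⟩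
  have hb : b - a ≠ 0 := by linarith
  field_simp at hceq
  linarith [hceq]

lemma rpow_step (p : ℝ) (hp : p ≤ 1) (M : ℕ) (hM : 1 ≤ M) :
    ∃ c : ℝ, ((M : ℝ) + 1) ^ (p - 1) ≤ c ^ (p - 1) ∧
      ((M : ℝ) + 1) ^ p - (M : ℝ) ^ p = p * c ^ (p - 1) := by
  have hM' : (0 : ℝ) < M := by exact_mod_cast hM
  obtain ⟨c, hc, hceq⟩ := rpow_mvt p (M : ℝ) ((M : ℝ) + 1) hM' (by linarith)
  have hcpos : 0 < c := hM'.trans hc.1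
  refine ⟨c, Real.rpow_le_rpow_of_nonpos hcpos hc.2.le (by linarith), ?_⟩
  rw [hceq]; ring

/-- If `0 < p < 1`, `∑_{i=1}^M i^{p-1} ≤ M^p / p`. -/
lemma sum_rpow_le (p : ℝ) (hp : 0 < p) (hp1 : p < 1) (M : ℕ) :
    ∑ i ∈ Icc 1 M, (i : ℝ) ^ (p - 1) ≤ (M : ℝ) ^ p / p := by
  induction M with
  | zero => simp [Real.zero_rpow hp.ne']
  | succ M ih =>
    rw [Finset.sum_Icc_succ_top (Nat.one_le_iff_ne_zero.mpr (Nat.succ_ne_zero M))]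
    have key : p * ((M : ℝ) + 1) ^ (p - 1) ≤ ((M : ℝ) + 1) ^ p - (M : ℝ) ^ p := by
      rcases Nat.eq_zero_or_pos M with h0 | hMpos
      · subst h0
        simp only [Nat.cast_zero, zero_add, Real.one_rpow, Real.zero_rpow hp.ne', sub_zero]
        linarith
      · obtain ⟨c, hle, heq⟩ := rpow_step p hp1.le M hMpos
        rw [heq]
        exact mul_le_mul_of_nonneg_left hle hp.le
    have hcast : ((M + 1 : ℕ) : ℝ) = (M : ℝ) + 1 := by push_cast; ring
    rw [hcast]
    have h2 : ((M:ℝ)+1) ^ (p-1) ≤ (((M:ℝ)+1)^p - (M:ℝ)^p)/p := (le_div_iff₀ hp).mpr (by linarith)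
    have h3 : (M:ℝ)^p/p + (((M:ℝ)+1)^p - (M:ℝ)^p)/p = ((M:ℝ)+1)^p/p := by field_simp; ring
    linarith

/-- Tail sum bound: for `r < 0`, `∑_{i=m+1}^M i^{r-1} ≤ m^r / (-r)`. -/
lemma sum_rpow_tail_aux (r : ℝ) (hr : r < 0) (m : ℕ) (hm : 1 ≤ m) :
    ∀ M, m ≤ M → ∑ i ∈ Icc (m + 1) M, (i : ℝ) ^ (r - 1) ≤ ((m : ℝ) ^ r - (M : ℝ) ^ r) / (-r) := by
  refine Nat.le_induction ?_ ?_
  · simp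
  · intro M hmM ih
    rw [Finset.sum_Icc_succ_top (by omega)]
    obtain ⟨c, hle, heq⟩ := rpow_step r (by linarith) M (le_trans hm hmM)
    have h1 : (-r) * ((M : ℝ) + 1) ^ (r - 1) ≤ (-r) * c ^ (r - 1) :=
      mul_le_mul_of_nonneg_left hle (by linarith)
    have hcast : ((M + 1 : ℕ) : ℝ) = (M : ℝ) + 1 := by push_cast; ring
    rw [hcast]
    have h2 : ((M : ℝ) + 1) ^ (r - 1) ≤ ((M : ℝ) ^ r - ((M : ℝ) + 1) ^ r) / (-r) := by
      rw [le_div_iff₀ (by linarith)]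
      nlinarith
    have h3 : ((m : ℝ) ^ r - (M : ℝ) ^ r) / (-r) + ((M : ℝ) ^ r - ((M : ℝ) + 1) ^ r) / (-r)
        = ((m : ℝ) ^ r - ((M : ℝ) + 1) ^ r) / (-r) := by
      field_simp
      ring
    linarith

lemma sum_rpow_tail (r : ℝ) (hr : r < 0) (m : ℕ) (hm : 1 ≤ m) (M : ℕ) :
    ∑ i ∈ Icc (m + 1) M, (i : ℝ) ^ (r - 1) ≤ (m : ℝ) ^ r / (-r) := by
  rcases le_or_gt m M with h | h
  · refine (sum_rpow_tail_aux r hr m hm M h).trans ?_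
    have hMpos : (0:ℝ) < (M:ℝ) := by exact_mod_cast lt_of_lt_of_le hm h
    have : (0:ℝ) ≤ (M:ℝ) ^ r := (Real.rpow_pos_of_pos hMpos r).le
    apply div_le_div_of_nonneg_right ?_ (by linarith)
    · linarith
  · rw [Finset.Icc_eq_empty (by omega)]
    simp only [Finset.sum_empty]
    exact div_nonneg (Real.rpow_nonneg (Nat.cast_nonneg m) r) (by linarith)

/-- The key sum bound: `∑_{i=1}^M i^{α-3/2}/(1+i/s) ≤ Cα * s^{α-1/2}`. -/
lemma key_sum_bound (α s : ℝ) (hα : 1/2 < α) (hα1 : α < 1) (hs : 1 ≤ s) (M : ℕ) :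
    ∑ i ∈ Icc 1 M, (i : ℝ) ^ (α - 3/2) / (1 + (i : ℝ) / s) ≤
      (1 / (α - 1/2) + 2 / (3/2 - α)) * s ^ (α - 1/2) := by
  have hs0 : (0:ℝ) < s := by linarith
  set m : ℕ := ⌊s⌋₊ with hmdef
  have hm1 : 1 ≤ m := Nat.le_floor (by exact_mod_cast hs)
  have hms : (m : ℝ) ≤ s := Nat.floor_le hs0.le
  have hms2 : s / 2 ≤ (m : ℝ) := by
    rcases le_or_gt s 2 with h | h
    · have : (1:ℝ) ≤ (m:ℝ) := by exact_mod_cast hm1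
      linarith
    · have := Nat.sub_one_lt_floor s
      linarith
  have hexp : α - 3/2 = (α - 1/2) - 1 := by ring
  -- termwise bound valid for all i ≥ 1
  have hterm1 : ∀ i : ℕ, (i : ℝ) ^ (α - 3/2) / (1 + (i : ℝ) / s) ≤
      (i : ℝ) ^ ((α - 1/2) - 1) := by
    intro i
    rw [← hexp]
    exact div_le_self (Real.rpow_nonneg (Nat.cast_nonneg i) _)
      (by have : (0:ℝ) ≤ (i:ℝ)/s := by positivity
          linarith)
  -- termwise bound for the tail i ≥ m+1
  have hterm2 : ∀ i : ℕ, m + 1 ≤ i → (i : ℝ) ^ (α - 3/2) / (1 + (i : ℝ) / s) ≤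
      s * (i : ℝ) ^ ((α - 3/2) - 1) := by
    intro i hi
    have hi0 : (0:ℝ) < (i:ℝ) := by
      have : 1 ≤ i := le_trans (by omega) hi
      exact_mod_cast this
    have hnum : (0:ℝ) ≤ (i : ℝ) ^ (α - 3/2) := Real.rpow_nonneg hi0.le _
    have h1 : (i:ℝ)/s ≤ 1 + (i:ℝ)/s := by linarith
    have h2 : (0:ℝ) < (i:ℝ)/s := by positivity
    calc (i : ℝ) ^ (α - 3/2) / (1 + (i : ℝ) / s)
        ≤ (i : ℝ) ^ (α - 3/2) / ((i:ℝ)/s) := div_le_div_of_nonneg_left hnum h2 h1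
      _ = s * (i : ℝ) ^ ((α - 3/2) - 1) := by
          rw [Real.rpow_sub_one hi0.ne']
          field_simp
  -- nonnegativity of terms
  have hnn : ∀ i : ℕ, (0:ℝ) ≤ (i : ℝ) ^ (α - 3/2) / (1 + (i : ℝ) / s) := by
    intro i
    have : (0:ℝ) ≤ (i:ℝ)/s := by positivity
    exact div_nonneg (Real.rpow_nonneg (Nat.cast_nonneg i) _) (by linarith)
  -- split the sum
  have hsplit : ∑ i ∈ Icc 1 M, (i : ℝ) ^ (α - 3/2) / (1 + (i : ℝ) / s) ≤
      (∑ i ∈ Icc 1 m, (i:ℝ) ^ ((α - 1/2) - 1)) +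
      (∑ i ∈ Icc (m+1) M, s * (i:ℝ) ^ ((α - 3/2) - 1)) := by
    rcases le_or_gt M m with hMm | hmM
    · have h1 : ∑ i ∈ Icc 1 M, (i : ℝ) ^ (α - 3/2) / (1 + (i : ℝ) / s) ≤
          ∑ i ∈ Icc 1 m, (i:ℝ) ^ ((α - 1/2) - 1) := by
        calc ∑ i ∈ Icc 1 M, (i : ℝ) ^ (α - 3/2) / (1 + (i : ℝ) / s)
            ≤ ∑ i ∈ Icc 1 M, (i:ℝ) ^ ((α - 1/2) - 1) :=
              Finset.sum_le_sum (fun i _ => hterm1 i)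
          _ ≤ ∑ i ∈ Icc 1 m, (i:ℝ) ^ ((α - 1/2) - 1) := by
              apply Finset.sum_le_sum_of_subset_of_nonneg
              · exact Finset.Icc_subset_Icc_right hMm
              · intro i _ _
                exact Real.rpow_nonneg (Nat.cast_nonneg i) _
      have h2 : (0:ℝ) ≤ ∑ i ∈ Icc (m+1) M, s * (i:ℝ) ^ ((α - 3/2) - 1) := by
        apply Finset.sum_nonneg
        intro i _
        exact mul_nonneg hs0.le (Real.rpow_nonneg (Nat.cast_nonneg i) _)
      linarith
    · have hdecomp : ∑ i ∈ Icc 1 M, (i : ℝ) ^ (α - 3/2) / (1 + (i : ℝ) / s) =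
          (∑ i ∈ Icc 1 m, (i : ℝ) ^ (α - 3/2) / (1 + (i : ℝ) / s)) +
          (∑ i ∈ Icc (m+1) M, (i : ℝ) ^ (α - 3/2) / (1 + (i : ℝ) / s)) := by
        have hset : Finset.Icc 1 m ∪ Finset.Icc (m+1) M = Finset.Icc 1 M := by
          ext x
          simp only [Finset.mem_union, Finset.mem_Icc]
          omega
        have hdisj : Disjoint (Finset.Icc 1 m) (Finset.Icc (m+1) M) := by
          simp only [Finset.disjoint_left, Finset.mem_Icc]
          omega
        rw [← hset, Finset.sum_union hdisj]
      rw [hdecomp]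
      gcongr with i hi i hi
      · exact hterm1 i
      · exact hterm2 i (Finset.mem_Icc.mp hi).1
  have hsum1 : ∑ i ∈ Icc 1 m, (i:ℝ) ^ ((α - 1/2) - 1) ≤ s ^ (α - 1/2) / (α - 1/2) := by
    refine (sum_rpow_le (α - 1/2) (by linarith) (by linarith) m).trans ?_
    apply div_le_div_of_nonneg_right ?_ (by linarith)
    exact Real.rpow_le_rpow (Nat.cast_nonneg m) hms (by linarith)
  have hsum2 : ∑ i ∈ Icc (m+1) M, s * (i:ℝ) ^ ((α - 3/2) - 1) ≤
      2 * s ^ (α - 1/2) / (3/2 - α) := by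
    rw [← Finset.mul_sum]
    have := sum_rpow_tail (α - 3/2) (by linarith) m hm1 M
    have hmono : (m:ℝ) ^ (α - 3/2) ≤ (s/2) ^ (α - 3/2) :=
      Real.rpow_le_rpow_of_nonpos (by linarith) hms2 (by linarith)
    have hhalf : (s/2) ^ (α - 3/2) ≤ 2 * s ^ (α - 3/2) := by
      rw [Real.div_rpow hs0.le (by norm_num)]
      rw [div_le_iff₀ (Real.rpow_pos_of_pos (by norm_num) _)]
      have h2p : (2:ℝ) ^ (α - 3/2) * (2:ℝ) ^ (1:ℝ) ≥ 1 := by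
        rw [← Real.rpow_add (by norm_num)]
        have : (0:ℝ) ≤ α - 3/2 + 1 := by linarith
        calc (1:ℝ) = (2:ℝ) ^ (0:ℝ) := by norm_num
          _ ≤ (2:ℝ) ^ (α - 3/2 + 1) := Real.rpow_le_rpow_of_exponent_le (by norm_num) this
      have hsp : (0:ℝ) ≤ s ^ (α - 3/2) := Real.rpow_nonneg hs0.le _
      rw [Real.rpow_one] at h2p
      nlinarith
    have hss : s * ((m:ℝ) ^ (α - 3/2) / (-(α - 3/2))) ≤ 2 * s ^ (α - 1/2) / (3/2 - α) := by
      have hpos : (0:ℝ) < 3/2 - α := by linarith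
      have hstep : (m:ℝ) ^ (α - 3/2) ≤ 2 * s ^ (α - 3/2) := hmono.trans hhalf
      have hspow : s * s ^ (α - 3/2) = s ^ (α - 1/2) := by
        rw [← Real.rpow_one_add' hs0.le (by intro h; linarith : (1:ℝ) + (α - 3/2) ≠ 0)]
        congr 1
        ring
      have : s * ((m:ℝ) ^ (α - 3/2) / (-(α - 3/2))) = s * (m:ℝ) ^ (α - 3/2) / (3/2 - α) := by
        rw [show -(α - 3/2) = 3/2 - α by ring]
        ring
      rw [this]
      have h4 : s * (m:ℝ) ^ (α - 3/2) ≤ 2 * s ^ (α - 1/2) := by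
        nlinarith [mul_le_mul_of_nonneg_left hstep hs0.le]
      gcongr
    calc s * ∑ i ∈ Icc (m+1) M, (i:ℝ) ^ ((α - 3/2) - 1)
        ≤ s * ((m:ℝ) ^ (α - 3/2) / (-(α - 3/2))) := by
          apply mul_le_mul_of_nonneg_left this hs0.le
      _ ≤ 2 * s ^ (α - 1/2) / (3/2 - α) := hss
  have hfin : s ^ (α - 1/2) / (α - 1/2) + 2 * s ^ (α - 1/2) / (3/2 - α) =
      (1 / (α - 1/2) + 2 / (3/2 - α)) * s ^ (α - 1/2) := by
    field_simp
  linarith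


/-- Derivative facts for `g x = (√x)⁻¹ * V (x/s)`. -/
lemma g_hasDerivAt (V : ℝ → ℂ) (hV : ContDiffOn ℝ (⊤ : ℕ∞) V (Set.Ioi 0)) (s : ℝ) (hs : 0 < s)
    (x : ℝ) (hx : 0 < x) :
    HasDerivAt (fun y : ℝ => ((Real.sqrt y : ℝ) : ℂ)⁻¹ * V (y / s))
      ((((-(1:ℝ)/2) * x ^ (-(1:ℝ)/2 - 1) : ℝ) : ℂ) * V (x / s)
        + ((x ^ (-(1:ℝ)/2) : ℝ) : ℂ) * (deriv V (x / s) * (s⁻¹ : ℝ))) x := by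
  have hxs : 0 < x / s := div_pos hx hs
  -- derivative of the power part
  have h1 : HasDerivAt (fun y : ℝ => ((y ^ (-(1:ℝ)/2) : ℝ) : ℂ))
      (((-(1:ℝ)/2) * x ^ (-(1:ℝ)/2 - 1) : ℝ) : ℂ) x :=
    (Real.hasDerivAt_rpow_const (Or.inl hx.ne')).ofReal_comp
  -- derivative of V ∘ (·/s)
  have hVd : DifferentiableAt ℝ V (x / s) :=
    (hV.contDiffAt (Ioi_mem_nhds hxs)).differentiableAt (by simp)
  have hinner : HasDerivAt (fun y : ℝ => y / s) (s⁻¹ : ℝ) x := by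
    simpa [one_div] using (hasDerivAt_id x).div_const s
  have h2 : HasDerivAt (fun y : ℝ => V (y / s)) (deriv V (x / s) * (s⁻¹ : ℝ)) x := by
    simpa [Function.comp_def, mul_comm] using (hVd.hasDerivAt.scomp x hinner)
  have h3 := h1.mul h2
  -- convert statement about rpow to sqrt
  have hev : (fun y : ℝ => ((Real.sqrt y : ℝ) : ℂ)⁻¹ * V (y / s)) =ᶠ[nhds x]
      (fun y : ℝ => ((y ^ (-(1:ℝ)/2) : ℝ) : ℂ) * V (y / s)) := by
    filter_upwards [Ioi_mem_nhds hx] with y hy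
    have hy0 : (0:ℝ) < y := hy
    rw [Real.sqrt_eq_rpow]
    have h5 : (y:ℝ) ^ (-(1:ℝ)/2) = (y ^ ((1:ℝ)/2))⁻¹ := by
      rw [show (-(1:ℝ)/2) = -((1:ℝ)/2) by ring, Real.rpow_neg hy0.le]
    rw [h5, Complex.ofReal_inv]
  exact HasDerivAt.congr_of_eventuallyEq h3 hev

lemma g_deriv_norm_bound (V : ℝ → ℂ) (CV : ℝ)
    (hV0 : ∀ y : ℝ, 0 < y → ‖V y‖ ≤ CV / (1 + y))
    (hV1 : ∀ y : ℝ, 0 < y → ‖deriv V y‖ ≤ CV / (y * (1 + y)))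
    (hCV : 0 < CV) (s : ℝ) (hs : 0 < s) (x : ℝ) (hx : 0 < x) :
    ‖(((-(1:ℝ)/2) * x ^ (-(1:ℝ)/2 - 1) : ℝ) : ℂ) * V (x / s)
        + ((x ^ (-(1:ℝ)/2) : ℝ) : ℂ) * (deriv V (x / s) * (s⁻¹ : ℝ))‖ ≤
      (3/2) * CV * x ^ (-(3:ℝ)/2) / (1 + x / s) := by
  have hxs : 0 < x / s := div_pos hx hs
  have hD : 0 < 1 + x / s := by linarith
  have hx32 : (0:ℝ) < x ^ (-(3:ℝ)/2) := Real.rpow_pos_of_pos hx _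
  have hx12 : (0:ℝ) < x ^ (-(1:ℝ)/2) := Real.rpow_pos_of_pos hx _
  have hexp : (-(1:ℝ)/2 - 1) = (-(3:ℝ)/2) := by norm_num
  have ht1 : ‖(((-(1:ℝ)/2) * x ^ (-(1:ℝ)/2 - 1) : ℝ) : ℂ) * V (x / s)‖ ≤
      (1/2) * x ^ (-(3:ℝ)/2) * (CV / (1 + x / s)) := by
    rw [norm_mul, Complex.norm_real, Real.norm_eq_abs, hexp]
    have habs : |(-(1:ℝ)/2) * x ^ (-(3:ℝ)/2)| = (1/2) * x ^ (-(3:ℝ)/2) := by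
      rw [abs_mul, abs_of_pos hx32]
      norm_num
    rw [habs]
    exact mul_le_mul_of_nonneg_left (hV0 _ hxs) (by positivity)
  have ht2 : ‖((x ^ (-(1:ℝ)/2) : ℝ) : ℂ) * (deriv V (x / s) * (s⁻¹ : ℝ))‖ ≤
      x ^ (-(3:ℝ)/2) * (CV / (1 + x / s)) := by
    rw [norm_mul, norm_mul, Complex.norm_real, Complex.norm_real, Real.norm_eq_abs,
      Real.norm_eq_abs, abs_of_pos hx12, abs_of_pos (inv_pos.mpr hs)]
    have hdv := hV1 _ hxs
    have hkey : x ^ (-(1:ℝ)/2) * ((CV / (x / s * (1 + x / s))) * s⁻¹) =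
        x ^ (-(3:ℝ)/2) * (CV / (1 + x / s)) := by
      rw [← hexp, Real.rpow_sub hx, Real.rpow_one]
      field_simp
    calc x ^ (-(1:ℝ)/2) * (‖deriv V (x/s)‖ * s⁻¹)
        ≤ x ^ (-(1:ℝ)/2) * ((CV / (x / s * (1 + x / s))) * s⁻¹) := by
          apply mul_le_mul_of_nonneg_left ?_ hx12.le
          exact mul_le_mul_of_nonneg_right hdv (inv_pos.mpr hs).le
      _ = x ^ (-(3:ℝ)/2) * (CV / (1 + x / s)) := hkey
  calc ‖_ + _‖ ≤ _ := norm_add_le _ _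
    _ ≤ (1/2) * x ^ (-(3:ℝ)/2) * (CV / (1 + x / s)) + x ^ (-(3:ℝ)/2) * (CV / (1 + x / s)) :=
        add_le_add ht1 ht2
    _ = (3/2) * CV * x ^ (-(3:ℝ)/2) / (1 + x / s) := by ring

lemma g_diff_bound (V : ℝ → ℂ) (hV : ContDiffOn ℝ (⊤ : ℕ∞) V (Set.Ioi 0)) (CV : ℝ)
    (hV0 : ∀ y : ℝ, 0 < y → ‖V y‖ ≤ CV / (1 + y))
    (hV1 : ∀ y : ℝ, 0 < y → ‖deriv V y‖ ≤ CV / (y * (1 + y)))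
    (hCV : 0 < CV) (s : ℝ) (hs : 0 < s) (n : ℕ) (hn : 1 ≤ n) :
    ‖((Real.sqrt (↑(n+1)) : ℝ) : ℂ)⁻¹ * V ((↑(n+1)) / s)
      - ((Real.sqrt n : ℝ) : ℂ)⁻¹ * V ((n : ℝ) / s)‖ ≤
      (3/2) * CV * (n:ℝ) ^ (-(3:ℝ)/2) / (1 + (n:ℝ) / s) := by
  have hn0 : (0:ℝ) < n := by exact_mod_cast hn
  set C : ℝ := (3/2) * CV * (n:ℝ) ^ (-(3:ℝ)/2) / (1 + (n:ℝ) / s) with hC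
  have hIcc : Set.Icc (n:ℝ) ((n:ℝ)+1) ⊆ Set.Ioi 0 := fun x hx => lt_of_lt_of_le hn0 hx.1
  have key := Convex.norm_image_sub_le_of_norm_hasDerivWithin_le
    (f := fun y : ℝ => ((Real.sqrt y : ℝ) : ℂ)⁻¹ * V (y / s))
    (f' := fun x : ℝ => (((-(1:ℝ)/2) * x ^ (-(1:ℝ)/2 - 1) : ℝ) : ℂ) * V (x / s)
        + ((x ^ (-(1:ℝ)/2) : ℝ) : ℂ) * (deriv V (x / s) * (s⁻¹ : ℝ)))
    (s := Set.Icc (n:ℝ) ((n:ℝ)+1)) (C := C)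
    (fun x hx => (g_hasDerivAt V hV s hs x (hIcc hx)).hasDerivWithinAt)
    (fun x hx => ?_) (convex_Icc _ _)
    (Set.left_mem_Icc.mpr (by linarith)) (Set.right_mem_Icc.mpr (by linarith))
  · have : ‖(((n:ℝ)+1)) - (n:ℝ)‖ = 1 := by norm_num
    push_cast
    calc ‖_ - _‖ ≤ C * ‖((n:ℝ)+1) - (n:ℝ)‖ := key
      _ = C := by rw [this, mul_one]
  · have hx0 : 0 < x := hIcc hx
    refine (g_deriv_norm_bound V CV hV0 hV1 hCV s hs x hx0).trans ?_
    -- monotonicity in x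
    have h1 : x ^ (-(3:ℝ)/2) ≤ (n:ℝ) ^ (-(3:ℝ)/2) :=
      Real.rpow_le_rpow_of_nonpos hn0 hx.1 (by norm_num)
    have h2 : 1 + (n:ℝ)/s ≤ 1 + x/s := by
      have : (n:ℝ)/s ≤ x/s := by gcongr; exact hx.1
      linarith
    have hD : (0:ℝ) < 1 + (n:ℝ)/s := by positivity
    rw [hC]
    gcongr

lemma g_val_bound (V : ℝ → ℂ) (CV : ℝ)
    (hV0 : ∀ y : ℝ, 0 < y → ‖V y‖ ≤ CV / (1 + y))
    (s : ℝ) (hs : 0 < s) (x : ℝ) (hx : 0 < x) :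
    ‖((Real.sqrt x : ℝ) : ℂ)⁻¹ * V (x / s)‖ ≤ CV * x ^ (-(1:ℝ)/2) / (1 + x / s) := by
  have hxs : 0 < x / s := div_pos hx hs
  rw [norm_mul, norm_inv, Complex.norm_real, Real.norm_eq_abs,
    abs_of_nonneg (Real.sqrt_nonneg x)]
  have h1 : (Real.sqrt x)⁻¹ = x ^ (-(1:ℝ)/2) := by
    rw [Real.sqrt_eq_rpow, show (-(1:ℝ)/2) = -((1:ℝ)/2) by ring, Real.rpow_neg hx.le]
  rw [h1]
  have h2 : (0:ℝ) ≤ x ^ (-(1:ℝ)/2) := Real.rpow_nonneg hx.le _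
  calc x ^ (-(1:ℝ)/2) * ‖V (x/s)‖ ≤ x ^ (-(1:ℝ)/2) * (CV / (1 + x/s)) :=
        mul_le_mul_of_nonneg_left (hV0 _ hxs) h2
    _ = CV * x ^ (-(1:ℝ)/2) / (1 + x / s) := by ring

lemma claimC (α s t : ℝ) (hα : 1/2 < α) (hα1 : α < 1) (hs : 1 ≤ s) (ht : 1 ≤ t) :
    t ^ (α - 1/2) / (1 + t/s) ≤ s ^ (α - 1/2) := by
  have hs0 : (0:ℝ) < s := by linarith
  have ht0 : (0:ℝ) < t := by linarith
  have hts : (0:ℝ) < t/s := by positivity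
  rcases le_or_gt t s with h | h
  · have h1 : t ^ (α - 1/2) ≤ s ^ (α - 1/2) := Real.rpow_le_rpow ht0.le h (by linarith)
    have h2 : (1:ℝ) ≤ 1 + t/s := by linarith
    calc t ^ (α - 1/2) / (1 + t/s) ≤ t ^ (α - 1/2) :=
          div_le_self (Real.rpow_nonneg ht0.le _) h2
      _ ≤ s ^ (α - 1/2) := h1
  · have h1 : t ^ (α - 1/2) / (1 + t/s) ≤ t ^ (α - 1/2) / (t/s) :=
      div_le_div_of_nonneg_left (Real.rpow_nonneg ht0.le _) hts (by linarith)
    have h2 : t ^ (α - 1/2) / (t/s) = s * t ^ (α - 3/2) := by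
      rw [show α - 3/2 = (α - 1/2) - 1 by ring, Real.rpow_sub_one ht0.ne']
      field_simp
    have h3 : t ^ (α - 3/2) ≤ s ^ (α - 3/2) :=
      Real.rpow_le_rpow_of_nonpos hs0 h.le (by linarith)
    have h4 : s * s ^ (α - 3/2) = s ^ (α - 1/2) := by
      rw [← Real.rpow_one_add' hs0.le (by intro hh; linarith : (1:ℝ) + (α - 3/2) ≠ 0)]
      congr 1
      ring
    calc t ^ (α - 1/2) / (1 + t/s) ≤ s * t ^ (α - 3/2) := h1.trans_eq h2
      _ ≤ s * s ^ (α - 3/2) := mul_le_mul_of_nonneg_left h3 hs0.le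
      _ = s ^ (α - 1/2) := h4


lemma succ_rpow_le (α t : ℝ) (hα0 : 0 < α) (hα1 : α ≤ 1) (ht : 1 ≤ t) :
    (t + 1) ^ α ≤ 2 * t ^ α := by
  have h1 : (t+1) ^ α ≤ (2*t) ^ α := Real.rpow_le_rpow (by linarith) (by linarith) hα0.le
  have h2 : (2*t) ^ α = 2 ^ α * t ^ α := Real.mul_rpow (by norm_num) (by linarith)
  have h3 : (2:ℝ) ^ α ≤ 2 := by
    calc (2:ℝ) ^ α ≤ 2 ^ (1:ℝ) := Real.rpow_le_rpow_of_exponent_le (by norm_num) hα1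
      _ = 2 := Real.rpow_one 2
  have ht0 : (0:ℝ) ≤ t ^ α := Real.rpow_nonneg (by linarith) α
  nlinarith


/-- Partial summation step: if `V` is smooth on `(0,∞)` with
`|V(y)| ≤ C_V (1+y)^{-1}`, `|V'(y)| ≤ C_V y^{-1}(1+y)^{-1}`, and
`|∑_{n ≤ x} χ(n)| ≤ A x^α q^β` for all `x ≥ 1`, where `1/2 < α < 1`, then
`|∑_{n ≥ 1} χ(n) n^{-1/2} V(n/√q)| ≪ A q^{β + (α-1/2)/2}`, with an implied
constant depending only on `α` and `C_V`. -/
theorem partial_summation_approx_func_eq :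
    ∀ α : ℝ, 1 / 2 < α → α < 1 → ∀ CV : ℝ, 0 < CV →
    ∃ K : ℝ, 0 < K ∧
      ∀ V : ℝ → ℂ, ContDiffOn ℝ (⊤ : ℕ∞) V (Set.Ioi 0) →
        (∀ y : ℝ, 0 < y → ‖V y‖ ≤ CV / (1 + y)) →
        (∀ y : ℝ, 0 < y → ‖deriv V y‖ ≤ CV / (y * (1 + y))) →
      ∀ (q : ℕ), 2 ≤ q → ∀ χ : DirichletCharacter ℂ q,
      ∀ (A β : ℝ), 0 ≤ A → 0 < β →
        (∀ x : ℝ, 1 ≤ x →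
          ‖∑ n ∈ Finset.Icc 1 ⌊x⌋₊, χ (n : ZMod q)‖ ≤ A * x ^ α * (q : ℝ) ^ β) →
        ‖∑' n : ℕ, χ (n : ZMod q) / (Real.sqrt n : ℂ) * V ((n : ℝ) / Real.sqrt q)‖ ≤
          K * A * (q : ℝ) ^ (β + (α - 1 / 2) / 2) := by
  intro α hα hα1 CV hCV
  have h12 : (0:ℝ) < α - 1/2 := by linarith
  have h32 : (0:ℝ) < 3/2 - α := by linarith
  set Cα : ℝ := 1 / (α - 1/2) + 2 / (3/2 - α) with hCα
  have hCα0 : 0 < Cα := by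
    rw [hCα]
    have t1 := one_div_pos.mpr h12
    have t2 : (0:ℝ) < 2 / (3/2 - α) := div_pos (by norm_num) h32
    linarith
  refine ⟨CV * (2 + 3 * Cα), by positivity, ?_⟩
  intro V hV hV0 hV1 q hq χ A β hA hβ hX
  haveI : Fact (1 < q) := ⟨by omega⟩
  have hq1 : (1:ℝ) ≤ (q:ℝ) := by exact_mod_cast (by omega : 1 ≤ q)
  have hq0 : (0:ℝ) < (q:ℝ) := by linarith
  set s : ℝ := Real.sqrt q with hsdef
  have hs1 : 1 ≤ s := by
    rw [hsdef, show (1:ℝ) = Real.sqrt 1 by rw [Real.sqrt_one]]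
    exact Real.sqrt_le_sqrt hq1
  have hs0 : (0:ℝ) < s := by linarith
  -- χ(0) = 0
  have χ0 : χ ((0:ℕ) : ZMod q) = 0 := by
    rw [Nat.cast_zero]
    exact χ.map_nonunit not_isUnit_zero
  -- notation
  set w : ℕ → ℂ := fun i => ((Real.sqrt i : ℝ) : ℂ)⁻¹ * V ((i:ℝ)/s) with hwdef
  -- bound for S
  have hS : ∀ n : ℕ, ‖∑ j ∈ Finset.range n, χ ((j:ℕ) : ZMod q)‖ ≤ A * (n:ℝ) ^ α * (q:ℝ) ^ β := by
    intro n
    have hRHSnn : 0 ≤ A * (n:ℝ) ^ α * (q:ℝ) ^ β :=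
      mul_nonneg (mul_nonneg hA (Real.rpow_nonneg (Nat.cast_nonneg n) α))
        (Real.rpow_nonneg hq0.le β)
    match n with
    | 0 => simpa using hRHSnn
    | 1 =>
      rw [Finset.sum_range_one, χ0, norm_zero]
      exact hRHSnn
    | (m+2) =>
      have hsub : Finset.Icc 1 (m+1) ⊆ Finset.range (m+2) := by
        intro x hx
        simp only [Finset.mem_Icc] at hx
        simp only [Finset.mem_range]
        omega
      have heq : ∑ j ∈ Finset.range (m+2), χ ((j:ℕ) : ZMod q)
          = ∑ j ∈ Finset.Icc 1 (m+1), χ ((j:ℕ) : ZMod q) := by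
        refine (Finset.sum_subset hsub ?_).symm
        intro x hx hnx
        simp only [Finset.mem_range] at hx
        simp only [Finset.mem_Icc] at hnx
        have : x = 0 := by omega
        rw [this, χ0]
      have h1 : (1:ℝ) ≤ ((m+1 : ℕ) : ℝ) := by exact_mod_cast (by omega : 1 ≤ m+1)
      have := hX ((m+1 : ℕ) : ℝ) h1
      rw [Nat.floor_natCast] at this
      rw [heq]
      refine this.trans ?_
      have hle : ((m+1 : ℕ) : ℝ) ^ α ≤ ((m+2 : ℕ) : ℝ) ^ α := by
        apply Real.rpow_le_rpow (by positivity) ?_ (by linarith)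
        exact_mod_cast (by omega : m+1 ≤ m+2)
      have hqb : (0:ℝ) ≤ (q:ℝ) ^ β := Real.rpow_nonneg hq0.le β
      calc A * ((m+1:ℕ):ℝ) ^ α * (q:ℝ) ^ β ≤ A * ((m+2:ℕ):ℝ) ^ α * (q:ℝ) ^ β := by
            apply mul_le_mul_of_nonneg_right ?_ hqb
            exact mul_le_mul_of_nonneg_left hle hA
        _ = A * ((m+2:ℕ):ℝ) ^ α * (q:ℝ) ^ β := rfl
  -- the summand
  set a : ℕ → ℂ := fun n => χ ((n:ℕ) : ZMod q) / (Real.sqrt (n:ℝ) : ℂ) * V ((n:ℝ) / s)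
    with hadef
  have haw : ∀ n : ℕ, a n = w n * χ ((n:ℕ) : ZMod q) := by
    intro n
    rw [hadef, hwdef]
    simp only []
    ring
  -- summability
  have hsumm : Summable a := by
    apply Summable.of_norm_bounded (g := fun n : ℕ => CV * s * (n:ℝ) ^ (-(3:ℝ)/2))
    · exact (Real.summable_nat_rpow.mpr (by norm_num)).mul_left (CV * s)
    · intro n
      match n with
      | 0 =>
        have ha0 : a 0 = 0 := by simp [hadef]
        rw [ha0, norm_zero, Nat.cast_zero,
          Real.zero_rpow (by norm_num : (-(3:ℝ)/2) ≠ 0), mul_zero]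
      | (m+1) =>
        have hn0 : (0:ℝ) < ((m+1:ℕ):ℝ) := by exact_mod_cast Nat.succ_pos m
        have h1 : ‖a (m+1)‖ ≤ 1 * (CV * ((m+1:ℕ):ℝ) ^ (-(1:ℝ)/2) / (1 + ((m+1:ℕ):ℝ)/s)) := by
          rw [haw, norm_mul, mul_comm]
          exact mul_le_mul (χ.norm_le_one _) (g_val_bound V CV hV0 s hs0 _ hn0)
            (norm_nonneg _) zero_le_one
        rw [one_mul] at h1
        refine h1.trans ?_
        have h2 : (0:ℝ) < ((m+1:ℕ):ℝ)/s := by positivity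
        have h3 : CV * ((m+1:ℕ):ℝ) ^ (-(1:ℝ)/2) / (1 + ((m+1:ℕ):ℝ)/s) ≤
            CV * ((m+1:ℕ):ℝ) ^ (-(1:ℝ)/2) / (((m+1:ℕ):ℝ)/s) := by
          apply div_le_div_of_nonneg_left ?_ h2 (by linarith)
          positivity
        have h4 : CV * ((m+1:ℕ):ℝ) ^ (-(1:ℝ)/2) / (((m+1:ℕ):ℝ)/s) =
            CV * s * ((m+1:ℕ):ℝ) ^ (-(3:ℝ)/2) := by
          rw [show (-(3:ℝ)/2) = (-(1:ℝ)/2) - 1 by ring, Real.rpow_sub hn0, Real.rpow_one]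
          field_simp
        exact h3.trans_eq h4
  -- partial sum bound
  set B : ℝ := CV * (2 + 3 * Cα) * A * ((q:ℝ) ^ β * s ^ (α - 1/2)) with hBdef
  have hqb : (0:ℝ) ≤ (q:ℝ) ^ β := Real.rpow_nonneg hq0.le β
  have hspow : (0:ℝ) ≤ s ^ (α - 1/2) := Real.rpow_nonneg hs0.le _
  have hpart : ∀ N : ℕ, 2 ≤ N → ‖∑ i ∈ Finset.range N, a i‖ ≤ B := by
    intro N hN
    obtain ⟨M, rfl⟩ : ∃ M, N = M + 2 := ⟨N - 2, by omega⟩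
    have habel := Finset.sum_range_by_parts w (fun i : ℕ => χ ((i:ℕ) : ZMod q)) (M + 2)
    simp only [smul_eq_mul] at habel
    have hidx : M + 2 - 1 = M + 1 := rfl
    rw [hidx] at habel
    have hsum_eq : ∑ i ∈ Finset.range (M+2), a i
        = ∑ i ∈ Finset.range (M+2), w i * χ ((i:ℕ) : ZMod q) :=
      Finset.sum_congr rfl (fun i _ => haw i)
    rw [hsum_eq, habel]
    -- boundary term
    have ht1 : (1:ℝ) ≤ ((M+1:ℕ):ℝ) := by exact_mod_cast (by omega : 1 ≤ M+1)
    have ht0 : (0:ℝ) < ((M+1:ℕ):ℝ) := by linarith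
    have hcast : ((M+2:ℕ):ℝ) = ((M+1:ℕ):ℝ) + 1 := by push_cast; ring
    have hb1 : ‖w (M+1)‖ ≤ CV * ((M+1:ℕ):ℝ) ^ (-(1:ℝ)/2) / (1 + ((M+1:ℕ):ℝ)/s) :=
      g_val_bound V CV hV0 s hs0 _ ht0
    have hb2 : ‖∑ j ∈ Finset.range (M+2), χ ((j:ℕ) : ZMod q)‖
        ≤ 2 * A * ((M+1:ℕ):ℝ) ^ α * (q:ℝ) ^ β := by
      refine (hS (M+2)).trans ?_
      rw [hcast]
      have h5 := succ_rpow_le α ((M+1:ℕ):ℝ) (by linarith) hα1.le ht1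
      have h6 := mul_le_mul_of_nonneg_right
        (mul_le_mul_of_nonneg_left h5 hA) hqb
      calc A * (((M+1:ℕ):ℝ) + 1) ^ α * (q:ℝ) ^ β
          ≤ A * (2 * ((M+1:ℕ):ℝ) ^ α) * (q:ℝ) ^ β := h6
        _ = 2 * A * ((M+1:ℕ):ℝ) ^ α * (q:ℝ) ^ β := by ring
    have hbb : ‖w (M+1) * ∑ j ∈ Finset.range (M+2), χ ((j:ℕ) : ZMod q)‖
        ≤ 2 * CV * A * (q:ℝ) ^ β * s ^ (α - 1/2) := by
      rw [norm_mul]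
      have hmul : ((M+1:ℕ):ℝ) ^ (-(1:ℝ)/2) * ((M+1:ℕ):ℝ) ^ α = ((M+1:ℕ):ℝ) ^ (α - 1/2) := by
        rw [← Real.rpow_add ht0]
        congr 1
        ring
      calc ‖w (M+1)‖ * ‖∑ j ∈ Finset.range (M+2), χ ((j:ℕ) : ZMod q)‖
          ≤ (CV * ((M+1:ℕ):ℝ) ^ (-(1:ℝ)/2) / (1 + ((M+1:ℕ):ℝ)/s))
            * (2 * A * ((M+1:ℕ):ℝ) ^ α * (q:ℝ) ^ β) := by
            apply mul_le_mul hb1 hb2 (norm_nonneg _) ?_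
            positivity
        _ = 2 * CV * A * (q:ℝ) ^ β * (((M+1:ℕ):ℝ) ^ (α - 1/2) / (1 + ((M+1:ℕ):ℝ)/s)) := by
            rw [← hmul]
            ring
        _ ≤ 2 * CV * A * (q:ℝ) ^ β * (s ^ (α - 1/2)) := by
            apply mul_le_mul_of_nonneg_left (claimC α s _ hα hα1 hs1 ht1) (by positivity)
    -- main term
    have hmain : ‖∑ i ∈ Finset.range (M+1),
        (w (i+1) - w i) * ∑ j ∈ Finset.range (i+1), χ ((j:ℕ) : ZMod q)‖
        ≤ 3 * CV * A * (q:ℝ) ^ β * (Cα * s ^ (α - 1/2)) := by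
      refine (norm_sum_le _ _).trans ?_
      have hsubset : Finset.Icc 1 M ⊆ Finset.range (M+1) := by
        intro x hx
        simp only [Finset.mem_Icc] at hx
        simp only [Finset.mem_range]
        omega
      have hzero : ∀ i ∈ Finset.range (M+1), i ∉ Finset.Icc 1 M →
          ‖(w (i+1) - w i) * ∑ j ∈ Finset.range (i+1), χ ((j:ℕ) : ZMod q)‖ = 0 := by
        intro i hi hni
        simp only [Finset.mem_range] at hi
        simp only [Finset.mem_Icc] at hni
        have : i = 0 := by omega
        subst this
        rw [Finset.sum_range_one, χ0, mul_zero, norm_zero]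
      rw [← Finset.sum_subset hsubset hzero]
      have hterm : ∀ i ∈ Finset.Icc 1 M,
          ‖(w (i+1) - w i) * ∑ j ∈ Finset.range (i+1), χ ((j:ℕ) : ZMod q)‖ ≤
          3 * CV * A * (q:ℝ) ^ β * ((i:ℝ) ^ (α - 3/2) / (1 + (i:ℝ)/s)) := by
        intro i hi
        have hi1 : 1 ≤ i := (Finset.mem_Icc.mp hi).1
        have hi0 : (0:ℝ) < (i:ℝ) := by exact_mod_cast hi1
        have hi1' : (1:ℝ) ≤ (i:ℝ) := by exact_mod_cast hi1
        have d1 : ‖w (i+1) - w i‖ ≤ (3/2) * CV * (i:ℝ) ^ (-(3:ℝ)/2) / (1 + (i:ℝ)/s) :=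
          g_diff_bound V hV CV hV0 hV1 hCV s hs0 i hi1
        have hcast2 : ((i+1:ℕ):ℝ) = (i:ℝ) + 1 := by push_cast; ring
        have d2 : ‖∑ j ∈ Finset.range (i+1), χ ((j:ℕ) : ZMod q)‖
            ≤ 2 * A * (i:ℝ) ^ α * (q:ℝ) ^ β := by
          refine (hS (i+1)).trans ?_
          rw [hcast2]
          have h5 := succ_rpow_le α (i:ℝ) (by linarith) hα1.le hi1'
          have h6 := mul_le_mul_of_nonneg_right
            (mul_le_mul_of_nonneg_left h5 hA) hqb
          calc A * ((i:ℝ) + 1) ^ α * (q:ℝ) ^ β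
              ≤ A * (2 * (i:ℝ) ^ α) * (q:ℝ) ^ β := h6
            _ = 2 * A * (i:ℝ) ^ α * (q:ℝ) ^ β := by ring
        have hmul2 : (i:ℝ) ^ (-(3:ℝ)/2) * (i:ℝ) ^ α = (i:ℝ) ^ (α - 3/2) := by
          rw [← Real.rpow_add hi0]
          congr 1
          ring
        rw [norm_mul]
        calc ‖w (i+1) - w i‖ * ‖∑ j ∈ Finset.range (i+1), χ ((j:ℕ) : ZMod q)‖
            ≤ ((3/2) * CV * (i:ℝ) ^ (-(3:ℝ)/2) / (1 + (i:ℝ)/s))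
              * (2 * A * (i:ℝ) ^ α * (q:ℝ) ^ β) := by
              apply mul_le_mul d1 d2 (norm_nonneg _) ?_
              positivity
          _ = 3 * CV * A * (q:ℝ) ^ β * ((i:ℝ) ^ (α - 3/2) / (1 + (i:ℝ)/s)) := by
              rw [← hmul2]
              ring
      refine (Finset.sum_le_sum hterm).trans ?_
      rw [← Finset.mul_sum]
      apply mul_le_mul_of_nonneg_left ?_ (by positivity)
      exact key_sum_bound α s hα hα1 hs1 M
    calc ‖w (M+1) * (∑ j ∈ Finset.range (M+2), χ ((j:ℕ) : ZMod q))
          - ∑ i ∈ Finset.range (M+1),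
            (w (i+1) - w i) * ∑ j ∈ Finset.range (i+1), χ ((j:ℕ) : ZMod q)‖
        ≤ ‖w (M+1) * (∑ j ∈ Finset.range (M+2), χ ((j:ℕ) : ZMod q))‖
          + ‖∑ i ∈ Finset.range (M+1),
            (w (i+1) - w i) * ∑ j ∈ Finset.range (i+1), χ ((j:ℕ) : ZMod q)‖ :=
          norm_sub_le _ _
      _ ≤ 2 * CV * A * (q:ℝ) ^ β * s ^ (α - 1/2)
          + 3 * CV * A * (q:ℝ) ^ β * (Cα * s ^ (α - 1/2)) := add_le_add hbb hmain
      _ = B := by rw [hBdef]; ring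
  -- pass to the limit
  have htends : Filter.Tendsto (fun N => ‖∑ i ∈ Finset.range N, a i‖)
      Filter.atTop (nhds ‖∑' n, a n‖) := hsumm.hasSum.tendsto_sum_nat.norm
  have hfinal : ‖∑' n, a n‖ ≤ B :=
    le_of_tendsto htends (Filter.eventually_atTop.mpr ⟨2, fun N hN => hpart N hN⟩)
  refine hfinal.trans_eq ?_
  rw [hBdef]
  have hpow : (q:ℝ) ^ β * s ^ (α - 1/2) = (q:ℝ) ^ (β + (α - 1/2)/2) := by
    rw [hsdef, Real.sqrt_eq_rpow, ← Real.rpow_mul hq0.le, ← Real.rpow_add hq0]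
    congr 1
    ring
  rw [hpow]
end

section
/- Let $q$ be a squarefree positive integer, $\chi$ a primitive Dirichlet character modulo $q$, and write $d = \gcd(h, q)$, $q = de$ for an integer $h$. Factor $\chi = \chi_d \chi_e$ with $\chi_d, \chi_e$ primitive modulo $d$ and $e$ respectively. Then for any finite interval $I$ of integers, $\left| \sum_{n \in I} \chi(n) \overline{\chi(n+h)} \right| \leq \sum_{d' \mid d} \left| \sum_{n \in I/d'} \chi_e(n) \overline{\chi_e(n + \overline{d'} h)} \right|$, where $I/d' = \{ m : d' m \in I \}$ and $\overline{d'} d' \equiv 1 \pmod e$. -/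
/-!
Since `d ∣ h`, the factor `χ_d(n) conj χ_d(n + h) = |χ_d(n)|²` is the indicator of
`gcd(n, d) = 1`, so only `χ_e` survives in the summand. Detecting `gcd(n, d) = 1` by
`∑_{d' ∣ gcd(n, d)} μ(d')` and substituting `n = d'm`, the unit `d'` modulo `e` factors out of
`χ_e(d'm) conj χ_e(d'm + h)` as `|χ_e(d')|² = 1`, leaving the shift `d'⁻¹ h`. The triangle
inequality with `|μ| ≤ 1` concludes.
-/

open Finset
open scoped ArithmeticFunction.Moebius ComplexConjugate

namespace ArithmeticFunction

variable {R : Type*} [Ring R] {d : ℕ}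

theorem sum_divisors_moebius (n : ℕ) :
    ∑ i ∈ n.divisors, (μ i : R) = if n = 1 then 1 else 0 := by
  rw [← one_apply, ← coe_moebius_mul_coe_zeta, coe_mul_zeta_apply]
  simp

theorem sum_divisors_filter_dvd_moebius (hd : d ≠ 0) (n : ℤ) :
    ∑ d' ∈ d.divisors with ↑d' ∣ n, (μ d' : R) = if Int.gcd d n = 1 then 1 else 0 := by
  have hfilter : {d' ∈ d.divisors | ↑d' ∣ n} = (Int.gcd d n).divisors := by
    ext d'
    simp [Int.natCast_dvd, Int.gcd, Nat.dvd_gcd_iff, hd]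
  rw [hfilter, sum_divisors_moebius]

theorem sum_eq_sum_divisors_moebius_mul_sum_dvd (hd : d ≠ 0) (s : Finset ℤ) {f g : ℤ → R}
    (hunit : ∀ n : ℤ, IsUnit (n : ZMod d) → f n = g n)
    (hnonunit : ∀ n : ℤ, ¬IsUnit (n : ZMod d) → f n = 0) :
    ∑ n ∈ s, f n = ∑ d' ∈ d.divisors, (μ d' : R) * ∑ n ∈ s with ↑d' ∣ n, g n := by
  calc ∑ n ∈ s, f n
      = ∑ n ∈ s, ∑ d' ∈ d.divisors with ↑d' ∣ n, (μ d' : R) * g n := by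
        refine sum_congr rfl fun n _ => ?_
        have hunit_iff : IsUnit (n : ZMod d) ↔ Int.gcd d n = 1 :=
          (ZMod.coe_int_isUnit_iff_isCoprime n d).trans Int.isCoprime_iff_gcd_eq_one
        rw [← sum_mul, sum_divisors_filter_dvd_moebius hd]
        by_cases hn : Int.gcd d n = 1
        · rw [if_pos hn, one_mul, hunit n (hunit_iff.mpr hn)]
        · rw [if_neg hn, zero_mul, hnonunit n (mt hunit_iff.mp hn)]
    _ = ∑ d' ∈ d.divisors, ∑ n ∈ s with ↑d' ∣ n, (μ d' : R) * g n := by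
        simp_rw [sum_filter]
        exact sum_comm
    _ = _ := by simp_rw [mul_sum]

end ArithmeticFunction

namespace MulChar

variable {R : Type*} [CommRing R] [Finite Rˣ] (χ : MulChar R ℂ)

theorem mul_conj_apply_of_isUnit {a : R} (ha : IsUnit a) : χ a * conj (χ a) = 1 := by
  rw [starRingEnd_apply, star_apply', ← mul_apply, mul_inv_cancel, one_apply ha]

theorem apply_mul_mul_conj_apply_mul_add {u v : R} (huv : u * v = 1) (x y : R) :
    χ (u * x) * conj (χ (u * x + y)) = χ x * conj (χ (x + v * y)) := by
  have hux : u * x + y = u * (x + v * y) := by linear_combination (-y) * huv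
  rw [hux, map_mul, map_mul, map_mul]
  linear_combination (χ x * conj (χ (x + v * y))) *
    mul_conj_apply_of_isUnit χ (IsUnit.of_mul_eq_one v huv)

end MulChar

theorem Finset.sum_filter_dvd_eq_sum_mul {M : Type*} [AddCommMonoid M] {s t : Finset ℤ} {k : ℤ}
    (hk : k ≠ 0) (ht : ∀ m, m ∈ t ↔ k * m ∈ s) (f : ℤ → M) :
    ∑ n ∈ s with k ∣ n, f n = ∑ m ∈ t, f (k * m) := by
  have himage : {n ∈ s | k ∣ n} = t.image (k * ·) := by
    ext n
    simp only [mem_filter, mem_image, ht]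
    constructor
    · rintro ⟨hn, m, rfl⟩
      exact ⟨m, hn, rfl⟩
    · rintro ⟨m, hm, rfl⟩
      exact ⟨hm, dvd_mul_right k m⟩
  rw [himage, sum_image fun _ _ _ _ h => mul_left_cancel₀ hk h]

namespace DirichletCharacter

variable {q d e : ℕ} {χ : DirichletCharacter ℂ q} {χd : DirichletCharacter ℂ d}
  {χe : DirichletCharacter ℂ e}

theorem mul_conj_apply_add_eq_of_dvd_of_isUnit
    (hfac : ∀ n : ℤ, χ (n : ZMod q) = χd (n : ZMod d) * χe (n : ZMod e))
    {h : ℤ} (hdh : (d : ℤ) ∣ h) {n : ℤ} (hn : IsUnit (n : ZMod d)) :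
    χ (n : ZMod q) * conj (χ ((n + h : ℤ) : ZMod q)) =
      χe (n : ZMod e) * conj (χe ((n + h : ℤ) : ZMod e)) := by
  have hshift : ((n + h : ℤ) : ZMod d) = n := by
    rw [Int.cast_add, (ZMod.intCast_zmod_eq_zero_iff_dvd h d).mpr hdh, add_zero]
  rw [hfac, hfac, hshift, map_mul]
  linear_combination (χe (n : ZMod e) * conj (χe ((n + h : ℤ) : ZMod e))) *
    MulChar.mul_conj_apply_of_isUnit χd hn

end DirichletCharacter

theorem shifted_char_sum_gcd_reduction_general
    (q : ℕ) (hsf : Squarefree q)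
    (χ : DirichletCharacter ℂ q)
    (h : ℤ) (d e : ℕ) (hd : d = Int.gcd h q) (hde : q = d * e)
    (χd : DirichletCharacter ℂ d)
    (χe : DirichletCharacter ℂ e)
    (hfac : ∀ n : ℤ, χ (n : ZMod q) = χd (n : ZMod d) * χe (n : ZMod e))
    (a b : ℤ) (J : ℕ → Finset ℤ)
    (hJ : ∀ d' ∈ d.divisors, ∀ m : ℤ, m ∈ J d' ↔ (d' : ℤ) * m ∈ Finset.Icc a b) :
    ‖∑ n ∈ Finset.Icc a b,
        χ (n : ZMod q) * (starRingEnd ℂ) (χ ((n + h : ℤ) : ZMod q))‖ ≤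
      ∑ d' ∈ d.divisors,
        ‖∑ m ∈ J d',
            χe (m : ZMod e) *
              (starRingEnd ℂ) (χe ((m : ZMod e) + ((d' : ZMod e))⁻¹ * (h : ZMod e)))‖ := by
  have hd0 : d ≠ 0 := left_ne_zero_of_mul (hde ▸ hsf.ne_zero)
  have hcop : d.Coprime e := Nat.coprime_of_squarefree_mul (hde ▸ hsf)
  have hdh : (d : ℤ) ∣ h := hd ▸ Int.gcd_dvd_left h q
  rw [ArithmeticFunction.sum_eq_sum_divisors_moebius_mul_sum_dvd hd0 _
    (fun n hn => DirichletCharacter.mul_conj_apply_add_eq_of_dvd_of_isUnit hfac hdh hn)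
    (fun n hn => by rw [hfac, χd.map_nonunit hn, zero_mul, zero_mul])]
  refine (norm_sum_le _ _).trans (sum_le_sum fun d' hd' => ?_)
  have hunit : (d' : ZMod e) * (d' : ZMod e)⁻¹ = 1 := ZMod.mul_inv_of_unit _ <|
    (ZMod.isUnit_iff_coprime d' e).mpr (hcop.coprime_dvd_left (Nat.dvd_of_mem_divisors hd'))
  rw [norm_mul, sum_filter_dvd_eq_sum_mul (by exact_mod_cast (Nat.pos_of_mem_divisors hd').ne')
    (hJ d' hd')]
  have hrescale : ∀ m : ℤ, χe ((d' * m : ℤ) : ZMod e) * conj (χe ((d' * m + h : ℤ) : ZMod e)) =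
      χe (m : ZMod e) * conj (χe ((m : ZMod e) + (d' : ZMod e)⁻¹ * (h : ZMod e))) := fun m => by
    push_cast
    exact MulChar.apply_mul_mul_conj_apply_mul_add χe hunit _ _
  rw [sum_congr rfl fun m _ => hrescale m]
  refine mul_le_of_le_one_left (norm_nonneg _) ?_
  rw [Complex.norm_intCast]
  exact_mod_cast ArithmeticFunction.abs_moebius_le_one

/-- Reduction to coprime shifts: for `q` squarefree, `χ` primitive mod `q`,
`d = gcd(h,q)`, `q = de`, and the factorization `χ = χ_d χ_e` into primitive
characters mod `d` and mod `e`,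
`|∑_{n∈I} χ(n) conj χ(n+h)| ≤ ∑_{d'∣d} |∑_{m∈I/d'} χ_e(m) conj χ_e(m + d̄'h)|`,
where `I/d' = {m : d'm ∈ I}` and `d̄'d' ≡ 1 (mod e)`. -/
theorem shifted_char_sum_gcd_reduction
    (q : ℕ) (hq : 0 < q) (hsf : Squarefree q)
    (χ : DirichletCharacter ℂ q) (hχ : χ.IsPrimitive)
    (h : ℤ) (d e : ℕ) (hd : d = Int.gcd h q) (hde : q = d * e)
    (χd : DirichletCharacter ℂ d) (hχd : χd.IsPrimitive)
    (χe : DirichletCharacter ℂ e) (hχe : χe.IsPrimitive)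
    (hfac : ∀ n : ℤ, χ (n : ZMod q) = χd (n : ZMod d) * χe (n : ZMod e))
    (a b : ℤ) (J : ℕ → Finset ℤ)
    (hJ : ∀ d' ∈ d.divisors, ∀ m : ℤ, m ∈ J d' ↔ (d' : ℤ) * m ∈ Finset.Icc a b) :
    ‖∑ n ∈ Finset.Icc a b,
        χ (n : ZMod q) * (starRingEnd ℂ) (χ ((n + h : ℤ) : ZMod q))‖ ≤
      ∑ d' ∈ d.divisors,
        ‖∑ m ∈ J d',
            χe (m : ZMod e) *
              (starRingEnd ℂ) (χe ((m : ZMod e) + ((d' : ZMod e))⁻¹ * (h : ZMod e)))‖ :=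
  shifted_char_sum_gcd_reduction_general q hsf χ h d e hd hde χd χe hfac a b J hJ
end
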